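/- arXiv:2108.01992 — 4 statements merged into one kernel-verified Lean document; each statement's English description precedes it below -/
import Mathlib

section
/- Let n and k be integers with 1 ≤ k and n ≥ 2k, and let A be the adjacency matrix (over ℝ) of the Johnson graph J(n,k). Then the set of eigenvalues of A is exactly {(k−ℓ)(n−k−ℓ)−ℓ : 0 ≤ ℓ ≤ k}, and the map ℓ ↦ (k−ℓ)(n−k−ℓ)−ℓ is strictly decreasing on {0,1,…,k}; in particular A has exactly k+1 distinct eigenvalues. -/
open scoped BigOperators

abbrev JVertex (n k : ℕ) := {s : Finset (Fin n) // s.card = k}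

def johnsonGraph (n k : ℕ) : SimpleGraph (JVertex n k) where
  Adj v v' := v ≠ v' ∧ (v.1 ∩ v'.1).card = k - 1
  symm := ⟨fun v v' h => ⟨h.1.symm, by rw [Finset.inter_comm]; exact h.2⟩⟩
  loopless := ⟨fun v h => h.1 rfl⟩

instance (n k : ℕ) : DecidableRel (johnsonGraph n k).Adj :=
  fun v v' => inferInstanceAs (Decidable (v ≠ v' ∧ (v.1 ∩ v'.1).card = k - 1))

/-!
Let `W_j` be the inclusion matrix of `j`-sets in `(j+1)`-sets and `A_j` the adjacency matrix of
`J(n,j)`. Counting common subsets and common supersets gives `W_j W_jᵀ = A_{j+1} + (j+1) I` and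
`W_jᵀ W_j = A_j + (n-j) I`. Since `p(W Wᵀ) W Wᵀ = W p(Wᵀ W) Wᵀ`, a polynomial annihilating `A_j`
becomes, after a shift, one annihilating `A_{j+1}` with the extra root `-(j+1)`; inductively
`∏_{ℓ ≤ k} (X - θ_ℓ)` with `θ_ℓ = (k-ℓ)(n-k-ℓ) - ℓ` annihilates `A_k`.

Conversely, `(A^i)_{vw}` counts walks, so it vanishes for `i < dist v w` but not for
`i = dist v w`; evaluating at a vertex at distance `deg p` shows that every monic annihilating
polynomial `p` has degree exceeding every distance. Two disjoint `k`-sets are at distance `k`,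
so the minimal polynomial has degree `k + 1` and is the product above.
-/

open Finset Polynomial

namespace SimpleGraph

variable {V : Type*} {G : SimpleGraph V}

theorem Reachable.exists_dist_eq_of_le {v w : V} (h : G.Reachable v w) {e : ℕ}
    (he : e ≤ G.dist v w) : ∃ u, G.Reachable v u ∧ G.dist v u = e := by
  obtain ⟨p, hp⟩ := h.exists_walk_length_eq_dist
  have hvu : G.Reachable v (p.getVert e) := ⟨p.take e⟩
  refine ⟨p.getVert e, hvu, le_antisymm ?_ ?_⟩
  · simpa [Walk.take_length, hp, he] using G.dist_le (p.take e)
  · obtain ⟨q, hq⟩ := hvu.exists_walk_length_eq_dist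
    have := G.dist_le (q.append (p.drop e))
    rw [Walk.length_append, Walk.drop_length, hq, hp] at this
    omega

variable [Fintype V] [DecidableEq V] (G) [DecidableRel G.Adj] {R : Type*}

theorem adjMatrix_pow_apply_eq_zero_of_lt_dist [Semiring R] {i : ℕ} {v w : V}
    (h : i < G.dist v w) : (G.adjMatrix R ^ i) v w = 0 := by
  have : IsEmpty {p : G.Walk v w | p.length = i} :=
    ⟨fun ⟨p, hp⟩ => h.not_ge (hp ▸ G.dist_le p)⟩
  rw [adjMatrix_pow_apply_eq_card_walk, Fintype.card_eq_zero, Nat.cast_zero]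

theorem adjMatrix_pow_dist_apply_ne_zero [Semiring R] [CharZero R] {v w : V}
    (h : G.Reachable v w) : (G.adjMatrix R ^ G.dist v w) v w ≠ 0 := by
  rw [adjMatrix_pow_apply_eq_card_walk, Nat.cast_ne_zero, ← Nat.pos_iff_ne_zero,
    Fintype.card_pos_iff]
  obtain ⟨p, hp⟩ := h.exists_walk_length_eq_dist
  exact ⟨⟨p, hp⟩⟩

theorem aeval_adjMatrix_apply_ne_zero [CommRing R] [CharZero R] {p : R[X]} (hp : p.Monic)
    {v w : V} (h : G.Reachable v w) (hdeg : p.natDegree = G.dist v w) :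
    aeval (G.adjMatrix R) p v w ≠ 0 := by
  have hlow : ∀ i ∈ range p.natDegree, (p.coeff i • G.adjMatrix R ^ i) v w = 0 :=
    fun i hi => by
      rw [Matrix.smul_apply, G.adjMatrix_pow_apply_eq_zero_of_lt_dist (hdeg ▸ mem_range.1 hi),
        smul_zero]
  rw [aeval_eq_sum_range, sum_range_succ, Matrix.add_apply, Matrix.sum_apply, sum_eq_zero hlow,
    zero_add, hp.coeff_natDegree, one_smul, hdeg]
  exact G.adjMatrix_pow_dist_apply_ne_zero h

theorem dist_lt_natDegree_of_aeval_adjMatrix_eq_zero [CommRing R] [CharZero R] {p : R[X]}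
    (hp : p.Monic) (hp0 : aeval (G.adjMatrix R) p = 0) {v w : V} (h : G.Reachable v w) :
    G.dist v w < p.natDegree := by
  by_contra! hle
  obtain ⟨u, hvu, hdist⟩ := h.exists_dist_eq_of_le hle
  exact G.aeval_adjMatrix_apply_ne_zero hp hvu hdist.symm (by rw [hp0, Matrix.zero_apply])

end SimpleGraph

section PolynomialShift

variable {R : Type*}

theorem Matrix.aeval_mul_mul [CommSemiring R] {α β : Type*} [Fintype α] [Fintype β]
    [DecidableEq α] [DecidableEq β] (U : Matrix α β R) (D : Matrix β α R) (p : R[X]) :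
    aeval (U * D) p * U = U * aeval (D * U) p := by
  induction p using Polynomial.induction_on' with
  | add p q hp hq => rw [map_add, map_add, Matrix.add_mul, Matrix.mul_add, hp, hq]
  | monomial i a =>
    have hpow : (U * D) ^ i * U = U * (D * U) ^ i := by
      induction i with
      | zero => simp
      | succ i ih => rw [pow_succ', pow_succ', Matrix.mul_assoc, ih]; simp only [Matrix.mul_assoc]
    simp only [aeval_monomial, Algebra.algebraMap_eq_smul_one, Matrix.smul_mul, Matrix.mul_smul,
      Matrix.one_mul, hpow]

theorem Matrix.aeval_mul_mul_X [CommSemiring R] {α β : Type*} [Fintype α] [Fintype β]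
    [DecidableEq α] [DecidableEq β] (U : Matrix α β R) (D : Matrix β α R) (p : R[X]) :
    aeval (U * D) (p * X) = U * aeval (D * U) p * D := by
  rw [map_mul, aeval_X, ← Matrix.mul_assoc, aeval_mul_mul]

theorem aeval_add_smul_one [CommSemiring R] {A : Type*} [Semiring A] [Algebra R A] (a : A)
    (c : R) (p : R[X]) : aeval (a + c • 1) p = aeval a (p.comp (X + C c)) := by
  rw [aeval_comp, map_add, aeval_X, aeval_C, Algebra.algebraMap_eq_smul_one]

theorem prod_X_sub_C_comp_X_add_C [CommRing R] {ι : Type*} (s : Finset ι) (f : ι → R) (c : R) :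
    (∏ i ∈ s, (X - C (f i))).comp (X + C c) = ∏ i ∈ s, (X - C (f i - c)) := by
  rw [Polynomial.prod_comp]
  refine prod_congr rfl fun i _ => ?_
  simp only [sub_comp, X_comp, C_comp, map_sub]
  ring

end PolynomialShift

namespace JVertex

variable {n k : ℕ}

theorem card_sdiff_eq_zero_iff {v w : JVertex n k} : #(v.1 \ w.1) = 0 ↔ v = w := by
  rw [card_eq_zero, sdiff_eq_empty_iff_subset, Subtype.ext_iff]
  exact ⟨fun h => eq_of_subset_of_card_le h (by rw [v.2, w.2]), fun h => h ▸ subset_rfl⟩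

theorem card_inter_add_card_sdiff (v w : JVertex n k) : #(v.1 ∩ w.1) + #(v.1 \ w.1) = k := by
  rw [Finset.card_inter_add_card_sdiff, v.2]

theorem card_union (v w : JVertex n k) : #(v.1 ∪ w.1) = k + #(v.1 \ w.1) := by
  rw [← card_sdiff_add_card, w.2, add_comm]

theorem exists_disjoint (hn : 2 * k ≤ n) : ∃ v w : JVertex n k, Disjoint v.1 w.1 := by
  obtain ⟨s, -, hs⟩ := exists_subset_card_eq (show k ≤ #(univ : Finset (Fin n)) by simp; omega)
  obtain ⟨t, hts, ht⟩ := exists_subset_card_eq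
    (show k ≤ #sᶜ by rw [card_compl, Fintype.card_fin, hs]; omega)
  exact ⟨⟨s, hs⟩, ⟨t, ht⟩, disjoint_of_subset_right hts disjoint_compl_right⟩

theorem sum_boole {R : Type*} [AddCommMonoidWithOne R] (P : Finset (Fin n) → Prop)
    [DecidablePred P] :
    ∑ x : JVertex n k, (if P x.1 then (1 : R) else 0) = #((univ.powersetCard k).filter P) := by
  rw [← Finset.sum_boole, Finset.sum_subtype _ (fun _ => mem_powersetCard_univ)]

end JVertex

section JohnsonGraph

open SimpleGraph

variable {n k : ℕ}

theorem johnsonGraph_adj_iff {v w : JVertex n k} :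
    (johnsonGraph n k).Adj v w ↔ #(v.1 \ w.1) = 1 := by
  have := v.card_inter_add_card_sdiff w
  change v ≠ w ∧ _ ↔ _
  rw [ne_eq, ← JVertex.card_sdiff_eq_zero_iff (v := v) (w := w)]
  omega

theorem card_sdiff_le_length {v w : JVertex n k} (p : (johnsonGraph n k).Walk v w) :
    #(v.1 \ w.1) ≤ p.length := by
  induction p with
  | nil => simp
  | @cons u u' w h p ih =>
    have htri := (card_le_card (sdiff_triangle u.1 u'.1 w.1)).trans (card_union_le _ _)
    rw [johnsonGraph_adj_iff.1 h] at htri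
    rw [Walk.length_cons]
    omega

theorem exists_johnsonGraph_adj_card_sdiff_eq {v w : JVertex n k} (h : v ≠ w) :
    ∃ u, (johnsonGraph n k).Adj v u ∧ #(u.1 \ w.1) + 1 = #(v.1 \ w.1) := by
  have hvw : 0 < #(v.1 \ w.1) := Nat.pos_of_ne_zero (JVertex.card_sdiff_eq_zero_iff.not.2 h)
  obtain ⟨x, hx⟩ := card_pos.1 hvw
  obtain ⟨y, hy⟩ := card_pos.1 (card_sdiff_comm (s := v.1) (t := w.1) (by rw [v.2, w.2]) ▸ hvw)
  rw [mem_sdiff] at hx hy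
  have hcard : #(insert y (v.1.erase x)) = k := by
    rw [card_insert_of_notMem (fun h => hy.2 (mem_of_mem_erase h)), card_erase_add_one hx.1, v.2]
  refine ⟨⟨insert y (v.1.erase x), hcard⟩, johnsonGraph_adj_iff.2 ?_, ?_⟩
  · have : v.1 \ insert y (v.1.erase x) = {x} := by grind
    rw [this, card_singleton]
  · have : insert y (v.1.erase x) \ w.1 = (v.1 \ w.1).erase x := by grind
    rw [this, card_erase_add_one (mem_sdiff.2 hx)]

theorem exists_johnsonGraph_walk_length_eq_card_sdiff (v w : JVertex n k) :
    ∃ p : (johnsonGraph n k).Walk v w, p.length = #(v.1 \ w.1) := by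
  induction hd : #(v.1 \ w.1) generalizing v with
  | zero =>
    obtain rfl := JVertex.card_sdiff_eq_zero_iff.1 hd
    exact ⟨.nil, rfl⟩
  | succ d ih =>
    obtain ⟨u, hvu, hu⟩ := exists_johnsonGraph_adj_card_sdiff_eq (v := v) (w := w)
      (fun h => by simp [h] at hd)
    obtain ⟨p, hp⟩ := ih u (by omega)
    exact ⟨.cons hvu p, by rw [Walk.length_cons, hp]⟩

theorem johnsonGraph_reachable (v w : JVertex n k) : (johnsonGraph n k).Reachable v w :=
  let ⟨p, _⟩ := exists_johnsonGraph_walk_length_eq_card_sdiff v w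
  p.reachable

theorem johnsonGraph_dist (v w : JVertex n k) : (johnsonGraph n k).dist v w = #(v.1 \ w.1) := by
  obtain ⟨p, hp⟩ := exists_johnsonGraph_walk_length_eq_card_sdiff v w
  obtain ⟨q, hq⟩ := (johnsonGraph_reachable v w).exists_walk_length_eq_dist
  exact le_antisymm (hp ▸ dist_le p) (hq ▸ card_sdiff_le_length q)

theorem johnsonGraph_adjMatrix_add_smul_one_apply {R : Type*} [CommRing R] (c : R)
    (v w : JVertex n k) :
    (adjMatrix R (johnsonGraph n k) + c • 1) v w
      = (if #(v.1 \ w.1) = 1 then 1 else 0) + (if #(v.1 \ w.1) = 0 then c else 0) := by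
  simp only [Matrix.add_apply, Matrix.smul_apply, adjMatrix_apply, johnsonGraph_adj_iff,
    Matrix.one_apply, ← JVertex.card_sdiff_eq_zero_iff (v := v) (w := w), smul_eq_mul, mul_ite,
    mul_one, mul_zero]

end JohnsonGraph

section InclusionMatrix

open Matrix SimpleGraph

variable (R : Type*) [CommRing R] (n : ℕ)

def inclusionMatrix (j : ℕ) : Matrix (JVertex n (j + 1)) (JVertex n j) R :=
  fun x y => if y.1 ⊆ x.1 then 1 else 0

variable {R n}

theorem inclusionMatrix_mul_transpose (j : ℕ) :
    inclusionMatrix R n j * (inclusionMatrix R n j)ᵀ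
      = adjMatrix R (johnsonGraph n (j + 1)) + ((j : R) + 1) • 1 := by
  refine Matrix.ext fun v w => ?_
  have hcount : (inclusionMatrix R n j * (inclusionMatrix R n j)ᵀ) v w
      = (#(v.1 ∩ w.1)).choose j := by
    simp only [mul_apply, transpose_apply, inclusionMatrix, ite_zero_mul_ite_zero, mul_one,
      ← subset_inter_iff]
    rw [JVertex.sum_boole (· ⊆ v.1 ∩ w.1), ← card_powersetCard]
    congr 2
    ext y
    simp [mem_powersetCard, and_comm]
  have hd := v.card_inter_add_card_sdiff w
  rw [hcount, johnsonGraph_adjMatrix_add_smul_one_apply]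
  rcases h : #(v.1 \ w.1) with _ | _ | d
  · simp [show #(v.1 ∩ w.1) = j + 1 by omega]
  · simp [show #(v.1 ∩ w.1) = j by omega]
  · simp [Nat.choose_eq_zero_of_lt (show #(v.1 ∩ w.1) < j by omega)]

theorem transpose_mul_inclusionMatrix (j : ℕ) :
    (inclusionMatrix R n j)ᵀ * inclusionMatrix R n j
      = adjMatrix R (johnsonGraph n j) + ((n : R) - j) • 1 := by
  refine Matrix.ext fun v w => ?_
  have hcount : ((inclusionMatrix R n j)ᵀ * inclusionMatrix R n j) v w
      = #((univ.powersetCard (j + 1)).filter (v.1 ∪ w.1 ⊆ ·)) := by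
    simp only [mul_apply, transpose_apply, inclusionMatrix, ite_zero_mul_ite_zero, mul_one,
      ← union_subset_iff]
    exact JVertex.sum_boole (v.1 ∪ w.1 ⊆ ·)
  have hjn : j ≤ n := by simpa [v.2] using card_le_univ v.1
  have hunion := v.card_union w
  rw [hcount, johnsonGraph_adjMatrix_add_smul_one_apply]
  rcases h : #(v.1 \ w.1) with _ | _ | d
  · rw [card_filter_powersetCard_subset _ _ _ (subset_univ _) (by omega), card_univ,
      Fintype.card_fin, hunion, h]
    simp [Nat.cast_sub hjn]
  · rw [card_filter_powersetCard_subset _ _ _ (subset_univ _) (by omega), card_univ,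
      Fintype.card_fin, hunion, h]
    simp
  · rw [card_eq_zero.2 (filter_eq_empty_iff.2 fun x hx hsub => ?_)]
    · simp
    · have := card_le_card hsub
      rw [mem_powersetCard_univ.1 hx] at this
      omega

end InclusionMatrix

section Eigenvalues

variable (R : Type*) [CommRing R]

def johnsonEigenvalue (n k ℓ : ℕ) : R := ((k : R) - ℓ) * ((n : R) - k - ℓ) - ℓ

noncomputable def johnsonPoly (n k : ℕ) : R[X] :=
  ∏ ℓ ∈ range (k + 1), (X - C (johnsonEigenvalue R n k ℓ))

variable {R}

theorem johnsonPoly_monic (n k : ℕ) : (johnsonPoly R n k).Monic :=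
  monic_prod_of_monic _ _ fun _ _ => monic_X_sub_C _

theorem natDegree_johnsonPoly [Nontrivial R] (n k : ℕ) :
    (johnsonPoly R n k).natDegree = k + 1 := by
  rw [johnsonPoly, natDegree_prod_of_monic _ _ fun _ _ => monic_X_sub_C _]
  simp

theorem johnsonPoly_isRoot_iff [IsDomain R] {n k : ℕ} {μ : R} :
    (johnsonPoly R n k).IsRoot μ ↔ ∃ ℓ ≤ k, johnsonEigenvalue R n k ℓ = μ := by
  simp only [johnsonPoly, IsRoot.def, eval_prod, eval_sub, eval_X, eval_C, prod_eq_zero_iff,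
    mem_range, Nat.lt_succ_iff, sub_eq_zero, eq_comm (a := μ)]

theorem johnsonEigenvalue_strictAntiOn [LinearOrder R] [IsStrictOrderedRing R] {n k : ℕ}
    (hn : 2 * k ≤ n) : StrictAntiOn (johnsonEigenvalue R n k) {ℓ | ℓ ≤ k} := by
  intro a (ha : a ≤ k) b (hb : b ≤ k) hab
  have hab' : (a : R) + 1 ≤ b := by exact_mod_cast hab
  have hsum : (a : R) + b + 1 ≤ n := by exact_mod_cast (by omega : a + b + 1 ≤ n)
  have hdiff : johnsonEigenvalue R n k a - johnsonEigenvalue R n k b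
      = ((b : R) - a) * ((n : R) - a - b + 1) := by
    unfold johnsonEigenvalue; ring
  have : 0 < ((b : R) - a) * ((n : R) - a - b + 1) := mul_pos (by linarith) (by linarith)
  linarith

open Matrix SimpleGraph in
theorem aeval_adjMatrix_johnsonPoly (n k : ℕ) :
    aeval (adjMatrix R (johnsonGraph n k)) (johnsonPoly R n k) = 0 := by
  induction k with
  | zero =>
    have hA : adjMatrix R (johnsonGraph n 0) = 0 :=
      Matrix.ext fun v w => by simp [adjMatrix_apply, johnsonGraph_adj_iff, card_eq_zero.1 v.2]
    simp [johnsonPoly, johnsonEigenvalue, hA]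
  | succ j ih =>
    set U := inclusionMatrix R n j
    set Q := ∏ ℓ ∈ range (j + 1), (X - C (johnsonEigenvalue R n (j + 1) ℓ - -((j : R) + 1)))
    have hA : adjMatrix R (johnsonGraph n (j + 1)) = U * Uᵀ + (-((j : R) + 1)) • 1 := by
      rw [inclusionMatrix_mul_transpose, neg_smul, add_neg_cancel_right]
    have hfactor : (johnsonPoly R n (j + 1)).comp (X + C (-((j : R) + 1))) = Q * X := by
      rw [johnsonPoly, prod_X_sub_C_comp_X_add_C, prod_range_succ]
      congr
      simp [johnsonEigenvalue]
    have hshift : Q.comp (X + C ((n : R) - j)) = johnsonPoly R n j := by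
      rw [prod_X_sub_C_comp_X_add_C, johnsonPoly]
      refine prod_congr rfl fun ℓ _ => ?_
      congr 2
      unfold johnsonEigenvalue; push_cast; ring
    calc aeval (adjMatrix R (johnsonGraph n (j + 1))) (johnsonPoly R n (j + 1))
        = aeval (U * Uᵀ) (Q * X) := by rw [hA, aeval_add_smul_one, hfactor]
      _ = U * aeval (Uᵀ * U) Q * Uᵀ := Matrix.aeval_mul_mul_X _ _ _
      _ = 0 := by
        rw [transpose_mul_inclusionMatrix, aeval_add_smul_one, hshift, ih, Matrix.mul_zero,
          Matrix.zero_mul]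

end Eigenvalues

open SimpleGraph in
theorem minpoly_adjMatrix_johnsonGraph {K : Type*} [Field K] [CharZero K] {n k : ℕ}
    (hn : 2 * k ≤ n) : minpoly K (adjMatrix K (johnsonGraph n k)) = johnsonPoly K n k := by
  have hmonic := minpoly.monic (Matrix.isIntegral (adjMatrix K (johnsonGraph n k)))
  refine (eq_of_monic_of_dvd_of_natDegree_le hmonic (johnsonPoly_monic n k)
    (minpoly.dvd K _ (aeval_adjMatrix_johnsonPoly n k)) ?_).symm
  obtain ⟨v, w, hvw⟩ := JVertex.exists_disjoint hn
  have hdist := (johnsonGraph n k).dist_lt_natDegree_of_aeval_adjMatrix_eq_zero hmonic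
    (minpoly.aeval K _) (johnsonGraph_reachable v w)
  rw [johnsonGraph_dist, sdiff_eq_self_of_disjoint hvw, v.2] at hdist
  rwa [natDegree_johnsonPoly]

theorem johnson_eigenvalues_general (n k : ℕ) (hn : 2 * k ≤ n) :
    {μ : ℝ | Module.End.HasEigenvalue
        (Matrix.toLin' (SimpleGraph.adjMatrix ℝ (johnsonGraph n k))) μ}
      = (fun ℓ : ℕ => ((k : ℝ) - ℓ) * ((n : ℝ) - k - ℓ) - ℓ) '' {ℓ : ℕ | ℓ ≤ k}
    ∧ StrictAntiOn (fun ℓ : ℕ => ((k : ℝ) - ℓ) * ((n : ℝ) - k - ℓ) - ℓ) {ℓ : ℕ | ℓ ≤ k}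
    ∧ {μ : ℝ | Module.End.HasEigenvalue
        (Matrix.toLin' (SimpleGraph.adjMatrix ℝ (johnsonGraph n k))) μ}.ncard = k + 1 := by
  have hspectrum : {μ : ℝ | Module.End.HasEigenvalue
      (Matrix.toLin' (SimpleGraph.adjMatrix ℝ (johnsonGraph n k))) μ}
        = johnsonEigenvalue ℝ n k '' {ℓ : ℕ | ℓ ≤ k} := by
    ext μ
    refine Module.End.hasEigenvalue_iff_isRoot.trans ?_
    rw [Matrix.minpoly_toLin', minpoly_adjMatrix_johnsonGraph hn, johnsonPoly_isRoot_iff]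
    rfl
  have hanti := johnsonEigenvalue_strictAntiOn (R := ℝ) hn
  refine ⟨hspectrum, hanti, ?_⟩
  rw [hspectrum, hanti.injOn.ncard_image, show {ℓ : ℕ | ℓ ≤ k} = ↑(Finset.Iic k) by ext; simp,
    Set.ncard_coe_finset, Nat.card_Iic]

/-- the eigenvalues of the adjacency matrix of the Johnson graph `J(n,k)`
(for `1 ≤ k`, `2k ≤ n`) are exactly `(k−ℓ)(n−k−ℓ)−ℓ` for `0 ≤ ℓ ≤ k`; this map is
strictly decreasing in `ℓ`, and there are exactly `k+1` distinct eigenvalues. -/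
theorem johnson_eigenvalues (n k : ℕ) (hk : 1 ≤ k) (hn : 2 * k ≤ n) :
    {μ : ℝ | Module.End.HasEigenvalue
        (Matrix.toLin' (SimpleGraph.adjMatrix ℝ (johnsonGraph n k))) μ}
      = (fun ℓ : ℕ => ((k : ℝ) - ℓ) * ((n : ℝ) - k - ℓ) - ℓ) '' {ℓ : ℕ | ℓ ≤ k}
    ∧ StrictAntiOn (fun ℓ : ℕ => ((k : ℝ) - ℓ) * ((n : ℝ) - k - ℓ) - ℓ) {ℓ : ℕ | ℓ ≤ k}
    ∧ {μ : ℝ | Module.End.HasEigenvalue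
        (Matrix.toLin' (SimpleGraph.adjMatrix ℝ (johnsonGraph n k))) μ}.ncard = k + 1 :=
  johnson_eigenvalues_general n k hn
end

section
/- Let n and k be integers with 1 ≤ k and n ≥ 2k, let A be the adjacency matrix (over ℝ) of the Johnson graph J(n,k), and fix a vertex w. For 0 ≤ ℓ ≤ k, let ν_ℓ = {v : |v ∩ w| = k−ℓ} and let |ν_ℓ⟩ = (1/√|ν_ℓ|) Σ_{v∈ν_ℓ} |v⟩. Then the (k+1)-dimensional subspace spanned by {|ν_ℓ⟩ : 0 ≤ ℓ ≤ k} is invariant under A and under the rank-one operator |w⟩⟨w|; consequently it is invariant under H = −γ A − |w⟩⟨w| for every real γ. -/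
open scoped BigOperators RealInnerProductSpace

/-- The set `ν_ℓ` of vertices `v` of `J(n,k)` with `|v ∩ w| = k − ℓ`. -/
def nuSet (n k : ℕ) (w : JVertex n k) (ℓ : ℕ) : Finset (JVertex n k) :=
  Finset.univ.filter (fun v => (v.1 ∩ w.1).card = k - ℓ)

/-- The normalized uniform superposition `|ν_ℓ⟩` over `ν_ℓ`. -/
noncomputable def nuVec (n k : ℕ) (w : JVertex n k) (ℓ : ℕ) :
    EuclideanSpace ℝ (JVertex n k) :=
  (Real.sqrt (nuSet n k w ℓ).card)⁻¹ •
    ∑ v ∈ nuSet n k w ℓ, EuclideanSpace.single v (1 : ℝ)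

/-! The stabiliser of `w` in `Sym(n)` acts on `J(n,k)` by graph automorphisms, and its orbits
are exactly the classes `ν_ℓ`: a permutation can move `v ∩ w` inside `w` and `v \ w` inside its
complement independently. So the span of the `|ν_ℓ⟩`, which is the space of vectors constant on
every `ν_ℓ`, is preserved by `A`. Since `ν_0 = {w}`, the operator `|w⟩⟨w|` maps everything onto the
line through `|ν_0⟩`. For `n ≥ 2k` every `ν_ℓ` with `ℓ ≤ k` is nonempty, so the `|ν_ℓ⟩` are
nonzero with disjoint supports, hence orthogonal, and span a space of dimension `k + 1`. -/

open Finset Matrix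
open scoped Pointwise

theorem Finset.exists_perm_mem_iff_of_card_eq {α : Type*} [Fintype α] [DecidableEq α]
    {s t : Finset α} (h : #s = #t) : ∃ σ : Equiv.Perm α, ∀ x, σ x ∈ t ↔ x ∈ s := by
  obtain ⟨σ, hσ⟩ := (Set.powersetCard.isPretransitive (α := α) (n := #s)).exists_smul_eq
    ⟨s, rfl⟩ ⟨t, h.symm⟩
  refine ⟨σ, fun x => ?_⟩
  have : σ • s = t := congrArg Subtype.val hσ
  rw [← this]
  exact Finset.smul_mem_smul_finset_iff σ

theorem Finset.exists_perm_mem_iff_of_card_inter_eq {α : Type*} [Fintype α] [DecidableEq α]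
    {w s t : Finset α} (hin : #(s ∩ w) = #(t ∩ w)) (hout : #(s \ w) = #(t \ w)) :
    ∃ π : Equiv.Perm α, (∀ x, π x ∈ w ↔ x ∈ w) ∧ ∀ x, π x ∈ t ↔ x ∈ s := by
  obtain ⟨σ, hσ⟩ := exists_perm_mem_iff_of_card_eq (s := s.subtype (· ∈ w))
    (t := t.subtype (· ∈ w)) (by simpa [filter_mem_eq_inter] using hin)
  obtain ⟨τ, hτ⟩ := exists_perm_mem_iff_of_card_eq (s := s.subtype (· ∉ w))
    (t := t.subtype (· ∉ w)) (by simpa [filter_notMem_eq_sdiff] using hout)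
  refine ⟨σ.subtypeCongr τ, fun x => ?_, fun x => ?_⟩ <;> by_cases hx : x ∈ w
  · simp [Equiv.Perm.subtypeCongr.left_apply _ _ hx, hx]
  · simpa [Equiv.Perm.subtypeCongr.right_apply _ _ hx, hx] using (τ ⟨x, hx⟩).2
  · simpa [Equiv.Perm.subtypeCongr.left_apply _ _ hx] using hσ ⟨x, hx⟩
  · simpa [Equiv.Perm.subtypeCongr.right_apply _ _ hx] using hτ ⟨x, hx⟩

theorem SimpleGraph.Iso.adjMatrix_mulVec_comp {R V W : Type*} [NonAssocSemiring R]
    [Fintype V] [Fintype W] {G : SimpleGraph V} {H : SimpleGraph W} [DecidableRel G.Adj]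
    [DecidableRel H.Adj] (φ : G ≃g H) (x : W → R) (v : V) :
    (G.adjMatrix R *ᵥ (x ∘ φ)) v = (H.adjMatrix R *ᵥ x) (φ v) := by
  simp only [mulVec, dotProduct, SimpleGraph.adjMatrix_apply]
  rw [← φ.toEquiv.sum_comp]
  simp [φ.map_adj_iff]

theorem Finset.card_map_inter_map {α β : Type*} [DecidableEq α] [DecidableEq β] (f : α ↪ β)
    (s t : Finset α) : #(s.map f ∩ t.map f) = #(s ∩ t) := by
  rw [← map_inter, card_map]

section

variable {n k : ℕ}

def johnsonGraphAutOfPerm (π : Equiv.Perm (Fin n)) : johnsonGraph n k ≃g johnsonGraph n k where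
  toEquiv := π.finsetCongr.subtypeEquiv fun s => by simp
  map_rel_iff' {v u} := by
    simp [johnsonGraph, card_map_inter_map, ← Subtype.val_inj]

theorem coe_johnsonGraphAutOfPerm (π : Equiv.Perm (Fin n)) (v : JVertex n k) :
    (johnsonGraphAutOfPerm π v).1 = v.1.map π.toEmbedding :=
  rfl

theorem card_inter_johnsonGraphAutOfPerm (π : Equiv.Perm (Fin n)) (u v : JVertex n k) :
    #((johnsonGraphAutOfPerm π u).1 ∩ (johnsonGraphAutOfPerm π v).1) = #(u.1 ∩ v.1) :=
  card_map_inter_map _ _ _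

variable (w : JVertex n k)

theorem exists_johnsonGraphAutOfPerm_eq (v v' : JVertex n k)
    (h : #(v.1 ∩ w.1) = #(v'.1 ∩ w.1)) :
    ∃ π : Equiv.Perm (Fin n), johnsonGraphAutOfPerm π w = w ∧ johnsonGraphAutOfPerm π v = v' := by
  have hout : #(v.1 \ w.1) = #(v'.1 \ w.1) := by
    have := card_sdiff_add_card_inter v.1 w.1
    have := card_sdiff_add_card_inter v'.1 w.1
    grind
  obtain ⟨π, hw, hv⟩ := exists_perm_mem_iff_of_card_inter_eq h hout
  refine ⟨π, ?_, ?_⟩ <;> ext x <;> simp only [coe_johnsonGraphAutOfPerm, mem_map_equiv]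
  · simpa using (hw (π.symm x)).symm
  · simpa using (hv (π.symm x)).symm

theorem mem_nuSet_iff {ℓ : ℕ} {v : JVertex n k} :
    v ∈ nuSet n k w ℓ ↔ #(v.1 ∩ w.1) = k - ℓ := by
  simp [nuSet]

theorem nuVec_apply (ℓ : ℕ) (v : JVertex n k) :
    nuVec n k w ℓ v = if #(v.1 ∩ w.1) = k - ℓ then (Real.sqrt #(nuSet n k w ℓ))⁻¹ else 0 := by
  simp [nuVec, nuSet]

theorem card_inter_le (v : JVertex n k) : #(v.1 ∩ w.1) ≤ k :=
  (card_le_card inter_subset_right).trans_eq w.2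

theorem mem_nuSet_sub_card_inter_iff {u v : JVertex n k} :
    v ∈ nuSet n k w (k - #(u.1 ∩ w.1)) ↔ #(v.1 ∩ w.1) = #(u.1 ∩ w.1) := by
  rw [mem_nuSet_iff, Nat.sub_sub_self (card_inter_le w u)]

def cardInterSubmodule : Submodule ℝ (EuclideanSpace ℝ (JVertex n k)) where
  carrier := {x | ∀ v v' : JVertex n k, #(v.1 ∩ w.1) = #(v'.1 ∩ w.1) → x v = x v'}
  add_mem' hx hy v v' h := by simp [hx v v' h, hy v v' h]
  zero_mem' _ _ _ := rfl
  smul_mem' c x hx v v' h := by simp [hx v v' h]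

theorem nuVec_mem_cardInterSubmodule (ℓ : ℕ) : nuVec n k w ℓ ∈ cardInterSubmodule w := by
  intro v v' h
  simp only [nuVec_apply, h]

theorem toEuclideanLin_adjMatrix_mem_cardInterSubmodule {x : EuclideanSpace ℝ (JVertex n k)}
    (hx : x ∈ cardInterSubmodule w) :
    toEuclideanLin ((johnsonGraph n k).adjMatrix ℝ) x ∈ cardInterSubmodule w := by
  intro v v' h
  obtain ⟨π, hw, rfl⟩ := exists_johnsonGraphAutOfPerm_eq w v v' h
  have hxπ : x ∘ johnsonGraphAutOfPerm π = x := funext fun u => hx _ _ <| by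
    simpa only [hw] using card_inter_johnsonGraphAutOfPerm π u w
  change _ = ((johnsonGraph n k).adjMatrix ℝ *ᵥ x) (johnsonGraphAutOfPerm π v)
  rw [← (johnsonGraphAutOfPerm π).adjMatrix_mulVec_comp, hxπ]
  rfl

theorem mem_span_nuVec_of_mem_cardInterSubmodule {x : EuclideanSpace ℝ (JVertex n k)}
    (hx : x ∈ cardInterSubmodule w) : x ∈ Submodule.span ℝ (nuVec n k w '' {ℓ | ℓ ≤ k}) := by
  set ℓ : JVertex n k → ℕ := fun u => k - #(u.1 ∩ w.1)
  set c : JVertex n k → ℝ := fun u => Real.sqrt #(nuSet n k w (ℓ u))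
  -- at `v`, only the `#ν` vertices `u` in the class of `v` contribute, each `x v / #ν`
  have hx_eq : x = ∑ u, (x u / c u) • nuVec n k w (ℓ u) := by
    ext v
    have hclass : ∀ u, #(v.1 ∩ w.1) = k - ℓ u ↔ u ∈ nuSet n k w (ℓ v) := fun u => by
      rw [mem_nuSet_sub_card_inter_iff, Nat.sub_sub_self (card_inter_le w u), eq_comm]
    have hcv : c v ≠ 0 := Real.sqrt_ne_zero'.2 <| Nat.cast_pos.2 <|
      card_pos.2 ⟨v, (mem_nuSet_sub_card_inter_iff w).2 rfl⟩
    have hterm : ∀ u ∈ nuSet n k w (ℓ v), x u / c u * (c u)⁻¹ = x v / c v ^ 2 := fun u hu => by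
      have hu' := (mem_nuSet_sub_card_inter_iff w).1 hu
      simp only [c, ℓ, hu', hx u v hu', pow_two, div_mul_eq_mul_div]
      ring
    simp only [WithLp.ofLp_sum, WithLp.ofLp_smul, Finset.sum_apply, Pi.smul_apply, nuVec_apply,
      smul_eq_mul, mul_ite, mul_zero, hclass]
    rw [← sum_filter, filter_mem_eq_inter, univ_inter, sum_congr rfl hterm]
    have hcard : (#(nuSet n k w (ℓ v)) : ℝ) = c v ^ 2 := (Real.sq_sqrt (Nat.cast_nonneg _)).symm
    rw [sum_const, nsmul_eq_mul, hcard]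
    field_simp
  rw [hx_eq]
  exact Submodule.sum_mem _ fun u _ => Submodule.smul_mem _ _ <|
    Submodule.subset_span ⟨ℓ u, Nat.sub_le _ _, rfl⟩

theorem span_nuVec_eq :
    Submodule.span ℝ (nuVec n k w '' {ℓ | ℓ ≤ k}) = cardInterSubmodule w := by
  refine le_antisymm (Submodule.span_le.2 ?_) fun x hx =>
    mem_span_nuVec_of_mem_cardInterSubmodule w hx
  rintro _ ⟨ℓ, -, rfl⟩
  exact nuVec_mem_cardInterSubmodule w ℓ

theorem nuSet_zero : nuSet n k w 0 = {w} := by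
  ext v
  rw [mem_nuSet_iff, mem_singleton, Nat.sub_zero]
  refine ⟨fun h => Subtype.ext ?_, fun h => by rw [h, inter_self, w.2]⟩
  have hv : v.1 ∩ w.1 = v.1 := eq_of_subset_of_card_le inter_subset_left (by rw [v.2, h])
  have hw : v.1 ∩ w.1 = w.1 := eq_of_subset_of_card_le inter_subset_right (by rw [w.2, h])
  exact hv.symm.trans hw

theorem nuVec_zero : nuVec n k w 0 = EuclideanSpace.single w 1 := by
  simp [nuVec, nuSet_zero]

theorem toEuclideanLin_single_self (x : EuclideanSpace ℝ (JVertex n k)) :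
    toEuclideanLin (Matrix.single w w (1 : ℝ)) x = x w • nuVec n k w 0 := by
  ext v
  simp [nuVec_zero, single_mulVec_eq, Pi.single_apply]

theorem nuSet_nonempty (hn : 2 * k ≤ n) {ℓ : ℕ} (hℓ : ℓ ≤ k) : (nuSet n k w ℓ).Nonempty := by
  obtain ⟨s, hsw, hs⟩ := exists_subset_card_eq (show k - ℓ ≤ #w.1 by rw [w.2]; omega)
  obtain ⟨t, htw, ht⟩ := exists_subset_card_eq
    (show ℓ ≤ #w.1ᶜ by rw [card_compl, w.2, Fintype.card_fin]; omega)
  have hdisj : Disjoint t w.1 := disjoint_of_subset_left htw disjoint_compl_left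
  have hst : (s ∪ t) ∩ w.1 = s := by
    rw [union_inter_distrib_right, inter_eq_left.2 hsw, disjoint_iff_inter_eq_empty.1 hdisj,
      union_empty]
  refine ⟨⟨s ∪ t, ?_⟩, ?_⟩
  · rw [card_union_of_disjoint (disjoint_of_subset_left hsw (disjoint_comm.1 hdisj)), hs, ht]
    omega
  · rw [mem_nuSet_iff, hst, hs]

theorem nuVec_ne_zero (hn : 2 * k ≤ n) {ℓ : ℕ} (hℓ : ℓ ≤ k) : nuVec n k w ℓ ≠ 0 := by
  obtain ⟨v, hv⟩ := nuSet_nonempty w hn hℓ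
  intro h
  have hv0 := congrArg (fun x : EuclideanSpace ℝ (JVertex n k) => x v) h
  simp only [nuVec_apply, if_pos ((mem_nuSet_iff w).1 hv)] at hv0
  exact Real.sqrt_ne_zero'.2 (Nat.cast_pos.2 (card_pos.2 ⟨v, hv⟩)) (inv_eq_zero.1 hv0)

theorem inner_nuVec_eq_zero {i j : ℕ} (hi : i ≤ k) (hj : j ≤ k) (hij : i ≠ j) :
    inner ℝ (nuVec n k w i) (nuVec n k w j) = 0 := by
  simp only [PiLp.inner_apply, nuVec_apply]
  refine sum_eq_zero fun v _ => ?_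
  split_ifs <;> first | omega | simp

theorem finrank_span_nuVec (hn : 2 * k ≤ n) :
    Module.finrank ℝ (Submodule.span ℝ (nuVec n k w '' {ℓ | ℓ ≤ k})) = k + 1 := by
  have hrange : nuVec n k w '' {ℓ | ℓ ≤ k} = Set.range fun i : Fin (k + 1) => nuVec n k w i := by
    ext; simp [Fin.exists_iff]
  have hli : LinearIndependent ℝ fun i : Fin (k + 1) => nuVec n k w i :=
    linearIndependent_of_ne_zero_of_inner_eq_zero (fun i => nuVec_ne_zero w hn i.is_le)
      fun i j hij => inner_nuVec_eq_zero w i.is_le j.is_le (Fin.val_ne_of_ne hij)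
  rw [hrange, finrank_span_eq_card hli, Fintype.card_fin]

end

theorem johnson_invariant_subspace_general (n k : ℕ) (hn : 2 * k ≤ n)
    (w : JVertex n k) :
    Module.finrank ℝ
        (Submodule.span ℝ (nuVec n k w '' {ℓ : ℕ | ℓ ≤ k})) = k + 1
    ∧ (∀ x ∈ Submodule.span ℝ (nuVec n k w '' {ℓ : ℕ | ℓ ≤ k}),
        Matrix.toEuclideanLin (SimpleGraph.adjMatrix ℝ (johnsonGraph n k)) x
          ∈ Submodule.span ℝ (nuVec n k w '' {ℓ : ℕ | ℓ ≤ k}))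
    ∧ (∀ x ∈ Submodule.span ℝ (nuVec n k w '' {ℓ : ℕ | ℓ ≤ k}),
        Matrix.toEuclideanLin (Matrix.single w w (1 : ℝ)) x
          ∈ Submodule.span ℝ (nuVec n k w '' {ℓ : ℕ | ℓ ≤ k}))
    ∧ ∀ γ : ℝ, ∀ x ∈ Submodule.span ℝ (nuVec n k w '' {ℓ : ℕ | ℓ ≤ k}),
        ((-γ) • Matrix.toEuclideanLin (SimpleGraph.adjMatrix ℝ (johnsonGraph n k))
          - Matrix.toEuclideanLin (Matrix.single w w (1 : ℝ))) x
          ∈ Submodule.span ℝ (nuVec n k w '' {ℓ : ℕ | ℓ ≤ k}) := by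
  set V := Submodule.span ℝ (nuVec n k w '' {ℓ : ℕ | ℓ ≤ k}) with hV
  have hA : ∀ x ∈ V, toEuclideanLin ((johnsonGraph n k).adjMatrix ℝ) x ∈ V := by
    simpa only [hV, span_nuVec_eq] using fun x => toEuclideanLin_adjMatrix_mem_cardInterSubmodule w
  have hB : ∀ x ∈ V, toEuclideanLin (Matrix.single w w (1 : ℝ)) x ∈ V := fun x _ => by
    rw [toEuclideanLin_single_self]
    exact V.smul_mem _ (Submodule.subset_span ⟨0, Nat.zero_le k, rfl⟩)
  refine ⟨finrank_span_nuVec w hn, hA, hB, fun γ x hx => ?_⟩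
  exact V.sub_mem (V.smul_mem _ (hA x hx)) (hB x hx)

/-- the `(k+1)`-dimensional span of the vectors `|ν_ℓ⟩`, `0 ≤ ℓ ≤ k`, is
invariant under the adjacency operator `A` of `J(n,k)`, under the rank-one operator
`|w⟩⟨w|`, and hence under `H = −γA − |w⟩⟨w|` for every real `γ`. -/
theorem johnson_invariant_subspace (n k : ℕ) (hk : 1 ≤ k) (hn : 2 * k ≤ n)
    (w : JVertex n k) :
    Module.finrank ℝ
        (Submodule.span ℝ (nuVec n k w '' {ℓ : ℕ | ℓ ≤ k})) = k + 1
    ∧ (∀ x ∈ Submodule.span ℝ (nuVec n k w '' {ℓ : ℕ | ℓ ≤ k}),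
        Matrix.toEuclideanLin (SimpleGraph.adjMatrix ℝ (johnsonGraph n k)) x
          ∈ Submodule.span ℝ (nuVec n k w '' {ℓ : ℕ | ℓ ≤ k}))
    ∧ (∀ x ∈ Submodule.span ℝ (nuVec n k w '' {ℓ : ℕ | ℓ ≤ k}),
        Matrix.toEuclideanLin (Matrix.single w w (1 : ℝ)) x
          ∈ Submodule.span ℝ (nuVec n k w '' {ℓ : ℕ | ℓ ≤ k}))
    ∧ ∀ γ : ℝ, ∀ x ∈ Submodule.span ℝ (nuVec n k w '' {ℓ : ℕ | ℓ ≤ k}),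
        ((-γ) • Matrix.toEuclideanLin (SimpleGraph.adjMatrix ℝ (johnsonGraph n k))
          - Matrix.toEuclideanLin (Matrix.single w w (1 : ℝ))) x
          ∈ Submodule.span ℝ (nuVec n k w '' {ℓ : ℕ | ℓ ≤ k}) :=
  johnson_invariant_subspace_general n k hn w
end

section
/- (Wilcox's formula.) Let M : ℝ → M_d(ℂ) be a continuously differentiable matrix-valued function of a real variable η. Then for all real t and η, the partial derivative in η of exp(M(η)t) exists and equals ∫₀^t exp(M(η)(t−s)) · M'(η) · exp(M(η)s) ds. -/
/-!
Duhamel's formula `exp(tB) - exp(tA) = ∫₀ᵗ exp((t-s)A) (B - A) exp(sB) ds`, obtained by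
differentiating `s ↦ exp((t-s)A) exp(sB)`, applied with `A = M η`, `B = M x` and
`M x - M η = (x - η) • dslope M η x`, writes `exp(t M x) - exp(t M η)` as `(x - η)` times an
integral depending continuously on `x`. Its value at `x = η` is then the derivative.
-/

open NormedSpace

section Caratheodory

variable {𝕜 E : Type*} [NontriviallyNormedField 𝕜] [NormedAddCommGroup E] [NormedSpace 𝕜 E]

theorem hasDerivAt_of_sub_eq_smul {f g : 𝕜 → E} {a : 𝕜} (hfg : ∀ x, f x - f a = (x - a) • g x)
    (hg : ContinuousAt g a) : HasDerivAt f (g a) a := by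
  rw [hasDerivAt_iff_tendsto_slope]
  refine (hg.tendsto.mono_left nhdsWithin_le_nhds).congr' ?_
  filter_upwards [self_mem_nhdsWithin] with x hx
  rw [slope_def_module, hfg, smul_smul, inv_mul_cancel₀ (sub_ne_zero.2 hx), one_smul]

end Caratheodory

variable {𝔸 : Type*} [NormedRing 𝔸] [NormedAlgebra ℂ 𝔸] [CompleteSpace 𝔸]

@[fun_prop]
theorem continuous_exp_of_normedAlgebra_complex : Continuous (exp : 𝔸 → 𝔸) :=
  continuous_iff_continuousAt.2 fun x => (exp_analytic (𝕂 := ℂ) x).continuousAt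

theorem hasDerivAt_exp_ofReal_smul (A : 𝔸) (s : ℝ) :
    HasDerivAt (fun s : ℝ => exp ((s : ℂ) • A)) (exp ((s : ℂ) • A) * A) s := by
  simpa [Function.comp_def] using
    (hasDerivAt_exp_smul_const A (s : ℂ)).scomp s Complex.ofRealCLM.hasDerivAt

theorem exp_smul_sub_exp_smul_eq_integral (A B : 𝔸) (t : ℝ) :
    exp ((t : ℂ) • B) - exp ((t : ℂ) • A) =
      ∫ s in (0 : ℝ)..t, exp (((t - s : ℝ) : ℂ) • A) * (B - A) * exp ((s : ℂ) • B) := by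
  have hderiv (s : ℝ) : HasDerivAt (fun s : ℝ => exp (((t - s : ℝ) : ℂ) • A) * exp ((s : ℂ) • B))
      (exp (((t - s : ℝ) : ℂ) • A) * (B - A) * exp ((s : ℂ) • B)) s := by
    have hA := (hasDerivAt_exp_ofReal_smul A (t - s)).comp_const_sub t s
    refine (hA.mul (hasDerivAt_exp_ofReal_smul B s)).congr_deriv ?_
    have hBcomm : exp ((s : ℂ) • B) * B = B * exp ((s : ℂ) • B) :=
      ((Commute.refl B).smul_right _).exp_right.eq.symm
    rw [hBcomm]
    noncomm_ring
  rw [intervalIntegral.integral_eq_sub_of_hasDerivAt (fun s _ => hderiv s)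
    (by apply Continuous.intervalIntegrable; fun_prop)]
  simp

theorem hasDerivAt_exp_smul_comp {M : ℝ → 𝔸} {η : ℝ} (hc : Continuous M)
    (hd : DifferentiableAt ℝ M η) (t : ℝ) :
    HasDerivAt (fun x => exp ((t : ℂ) • M x))
      (∫ s in (0 : ℝ)..t, exp (((t - s : ℝ) : ℂ) • M η) * deriv M η * exp ((s : ℂ) • M η)) η := by
  have hslope : Continuous (dslope M η) :=
    continuousOn_univ.1 ((continuousOn_dslope Filter.univ_mem).2 ⟨hc.continuousOn, hd⟩)
  set g : ℝ → 𝔸 := fun x =>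
    ∫ s in (0 : ℝ)..t, exp (((t - s : ℝ) : ℂ) • M η) * dslope M η x * exp ((s : ℂ) • M x)
  have hg : Continuous g :=
    intervalIntegral.continuous_parametric_intervalIntegral_of_continuous' (by fun_prop) 0 t
  have hsub (x : ℝ) : exp ((t : ℂ) • M x) - exp ((t : ℂ) • M η) = (x - η) • g x := by
    rw [exp_smul_sub_exp_smul_eq_integral, ← intervalIntegral.integral_smul, ← sub_smul_dslope]
    simp only [mul_smul_comm, smul_mul_assoc]
  simpa [g, dslope_same] using hasDerivAt_of_sub_eq_smul hsub hg.continuousAt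

open scoped Matrix.Norms.L2Operator

/-- Wilcox's formula: if `M : ℝ → M_d(ℂ)` is continuously differentiable,
then for all real `t` and `η`, the derivative in `η` of `exp(M(η)t)` exists and equals
`∫₀ᵗ exp(M(η)(t−s)) M'(η) exp(M(η)s) ds`. -/
theorem wilcox_formula (d : ℕ) (M : ℝ → Matrix (Fin d) (Fin d) ℂ)
    (hM : ContDiff ℝ 1 M) (t η : ℝ) :
    HasDerivAt (fun x : ℝ => NormedSpace.exp (((t : ℂ)) • M x))
      (∫ s in (0 : ℝ)..t,
        NormedSpace.exp ((((t - s : ℝ) : ℂ)) • M η) * deriv M η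
          * NormedSpace.exp (((s : ℂ)) • M η)) η :=
  hasDerivAt_exp_smul_comp hM.continuous (hM.differentiable one_ne_zero η) t
end

section
/- Fix an integer k ≥ 1 and a real number a ≠ 0. For 0 ≤ ℓ ≤ k define the real-analytic functions r_ℓ(ε) = (k−ℓ)(1−(k+ℓ)ε²) − ℓε² and p_ℓ(ε) = ε^{k−ℓ} √( k!(1−(2ℓ−1)ε²) / ( ℓ! (1−(ℓ−1)ε²)(1−ℓε²)⋯(1−(k−1)ε²) ) ) on a neighborhood of ε = 0. Then there exist δ > 0 and real-analytic functions η, ξ_0, ξ_1, …, ξ_k, λ on (−δ, δ) with η(0) = k, λ(0) = k, ξ_0 ≡ a, ξ_k(0) = 1, and ξ_ℓ(0) = 0 for 1 ≤ ℓ ≤ k−1, such that for all ε ∈ (−δ, δ): Σ_{ℓ=0}^{k} p_ℓ(ε) ξ_ℓ(ε) = 1 and λ(ε) ξ_ℓ(ε) = r_ℓ(ε) ξ_ℓ(ε) + η(ε) p_ℓ(ε) for every 0 ≤ ℓ ≤ k; i.e., (ξ_0(ε),…,ξ_k(ε))ᵀ is an eigenvector of the matrix diag(r_0(ε),…,r_k(ε))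 + η(ε)(p_ℓ(ε)p_{ℓ'}(ε))_{ℓ,ℓ'} with eigenvalue λ(ε). -/
open scoped BigOperators

/-- `r_ℓ(ε) = (k−ℓ)(1−(k+ℓ)ε²) − ℓε²` (the rescaled eigenvalue `ε²λ_ℓ` under `n = 1/ε²`). -/
noncomputable def rFun (k ℓ : ℕ) (ε : ℝ) : ℝ :=
  ((k : ℝ) - ℓ) * (1 - ((k : ℝ) + ℓ) * ε ^ 2) - ℓ * ε ^ 2

/-- `p_ℓ(ε) = ε^{k−ℓ} √( k!(1−(2ℓ−1)ε²) / ( ℓ!(1−(ℓ−1)ε²)(1−ℓε²)⋯(1−(k−1)ε²) ) )`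
(the overlap `‖P_ℓ|w⟩‖` under `n = 1/ε²`). -/
noncomputable def pFun (k ℓ : ℕ) (ε : ℝ) : ℝ :=
  ε ^ (k - ℓ) *
    Real.sqrt ((k.factorial : ℝ) * (1 - (2 * (ℓ : ℝ) - 1) * ε ^ 2) /
      ((ℓ.factorial : ℝ) *
        ∏ j ∈ Finset.range (k - ℓ + 1), (1 - (((ℓ : ℝ) - 1) + j) * ε ^ 2)))

/-!
Look for the branch in the form `λ = r₀ + εᵏ μ`, `ξ₀ = a`. Since `p₀ = εᵏ √q₀` with
`q₀ = pRadicand k 0` and `q₀(0) = k!`,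
the `ℓ = 0` equation forces `η = a μ / √q₀`, and for `ℓ ≥ 1` the equation is solved by
`ξ_ℓ = η p_ℓ / (λ - r_ℓ)`, whose denominator tends to `ℓ ≠ 0`. Everything is then analytic in
`(ε, μ)` near `ε = 0`, and only the normalisation `∑ p_ℓ ξ_ℓ = 1` is left. At `ε = 0` only the
term `ℓ = k` survives and the normalisation reads `a μ / (k √k!) = 1`: affine in `μ` with nonzero
slope, so the analytic implicit function theorem produces `μ(ε)`.
-/

open Filter Topology Finset
open scoped ContDiff Nat

attribute [local fun_prop] analyticAt_fst analyticAt_snd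

section ImplicitFunction

variable {𝕜 : Type*} [RCLike 𝕜] {E : Type*} [NormedAddCommGroup E] [NormedSpace 𝕜 E]

theorem ContinuousLinearMap.isInvertible_of_apply_one_ne_zero {f : 𝕜 →L[𝕜] 𝕜} (hf : f 1 ≠ 0) :
    f.IsInvertible := by
  refine .of_inverse (g := (f 1)⁻¹ • .id 𝕜 𝕜) ?_ ?_ <;>
    refine ContinuousLinearMap.ext_ring ?_ <;> simp [hf]

theorem AnalyticAt.exists_implicitFunction [CompleteSpace E] {F : E × 𝕜 → 𝕜} {x₀ : E} {y₀ c : 𝕜}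
    (hF : AnalyticAt 𝕜 F (x₀, y₀)) (hy : HasDerivAt (fun y => F (x₀, y)) c y₀) (hc : c ≠ 0) :
    ∃ g : E → 𝕜, AnalyticAt 𝕜 g x₀ ∧ g x₀ = y₀ ∧ ∀ᶠ x in 𝓝 x₀, F (x, g x) = F (x₀, y₀) := by
  have cdF : ContDiffAt 𝕜 ω F (x₀, y₀) := hF.contDiffAt
  have hinr : (fderiv 𝕜 F (x₀, y₀) ∘L .inr 𝕜 E 𝕜) 1 = c :=
    (hF.differentiableAt.hasFDerivAt.comp_hasDerivAt y₀
      ((hasDerivAt_const y₀ x₀).prodMk (hasDerivAt_id y₀))).unique hy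
  have hinv := ContinuousLinearMap.isInvertible_of_apply_one_ne_zero (hinr ▸ hc)
  exact ⟨cdF.implicitFunction (by simp) hinv, (cdF.contDiffAt_implicitFunction _ hinv).analyticAt,
    cdF.implicitFunction_apply_self _ hinv, cdF.eventually_apply_implicitFunction _ hinv⟩

theorem AnalyticAt.eventually_analyticAt_comp_graph {G : E × 𝕜 → 𝕜} {g : E → 𝕜} {x₀ : E}
    (hG : AnalyticAt 𝕜 G (x₀, g x₀)) (hg : AnalyticAt 𝕜 g x₀) :
    ∀ᶠ x in 𝓝 x₀, AnalyticAt 𝕜 (fun x => G (x, g x)) x :=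
  (hG.comp_of_eq (analyticAt_id.prod hg) rfl).eventually_analyticAt

end ImplicitFunction

section Overlaps

noncomputable def pRadicand (k ℓ : ℕ) (ε : ℝ) : ℝ :=
  (k.factorial : ℝ) * (1 - (2 * (ℓ : ℝ) - 1) * ε ^ 2) /
    ((ℓ.factorial : ℝ) * ∏ j ∈ Finset.range (k - ℓ + 1), (1 - (((ℓ : ℝ) - 1) + j) * ε ^ 2))

theorem pFun_eq (k ℓ : ℕ) (ε : ℝ) : pFun k ℓ ε = ε ^ (k - ℓ) * √(pRadicand k ℓ ε) := rfl

theorem pRadicand_zero (k ℓ : ℕ) : pRadicand k ℓ 0 = k ! / ℓ ! := by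
  simp [pRadicand]

theorem pRadicand_zero_pos (k ℓ : ℕ) : 0 < pRadicand k ℓ 0 := by
  rw [pRadicand_zero]; positivity

theorem analyticAt_pRadicand (k ℓ : ℕ) : AnalyticAt ℝ (pRadicand k ℓ) 0 := by
  have hden : AnalyticAt ℝ (fun ε : ℝ => (ℓ ! : ℝ) *
      ∏ j ∈ range (k - ℓ + 1), (1 - (((ℓ : ℝ) - 1) + j) * ε ^ 2)) 0 :=
    analyticAt_const.mul (Finset.analyticAt_fun_prod _ fun j _ => by fun_prop)
  exact (by fun_prop : AnalyticAt ℝ (fun ε : ℝ => (k ! : ℝ) * (1 - (2 * (ℓ : ℝ) - 1) * ε ^ 2)) 0).div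
    hden (by simp [Nat.factorial_ne_zero])

theorem analyticAt_sqrt_pRadicand (k ℓ : ℕ) : AnalyticAt ℝ (fun ε => √(pRadicand k ℓ ε)) 0 :=
  ((analyticAt_pRadicand k ℓ).contDiffAt (n := ω).sqrt (pRadicand_zero_pos k ℓ).ne').analyticAt

theorem analyticAt_pFun (k ℓ : ℕ) : AnalyticAt ℝ (pFun k ℓ) 0 :=
  (analyticAt_id.pow _).mul (analyticAt_sqrt_pRadicand k ℓ)

theorem pFun_self_zero (k : ℕ) : pFun k k 0 = 1 := by
  simp [pFun_eq, pRadicand_zero, Nat.factorial_ne_zero]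

theorem pFun_zero_of_lt {k ℓ : ℕ} (h : ℓ < k) : pFun k ℓ 0 = 0 := by
  simp [pFun_eq, Nat.sub_ne_zero_of_lt h]

theorem rFun_zero (k ℓ : ℕ) : rFun k ℓ 0 = k - ℓ := by
  simp [rFun]

end Overlaps

section Branch

noncomputable def branchLam (k : ℕ) (ε μ : ℝ) : ℝ := rFun k 0 ε + ε ^ k * μ

noncomputable def branchEta (k : ℕ) (a ε μ : ℝ) : ℝ := a * μ / √(pRadicand k 0 ε)

noncomputable def branchXi (k : ℕ) (a : ℝ) (ℓ : ℕ) (ε μ : ℝ) : ℝ :=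
  if ℓ = 0 then a else branchEta k a ε μ * pFun k ℓ ε / (branchLam k ε μ - rFun k ℓ ε)

noncomputable def secularFun (k : ℕ) (a ε μ : ℝ) : ℝ :=
  ∑ ℓ ∈ range (k + 1), pFun k ℓ ε * branchXi k a ℓ ε μ - 1

variable {k : ℕ} {a : ℝ}

theorem branchLam_zero (hk : k ≠ 0) (μ : ℝ) : branchLam k 0 μ = k := by
  simp [branchLam, rFun_zero, hk]

theorem branchLam_sub_rFun_zero (hk : k ≠ 0) (μ : ℝ) (ℓ : ℕ) :
    branchLam k 0 μ - rFun k ℓ 0 = ℓ := by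
  simp [branchLam_zero hk, rFun_zero]

theorem branchEta_zero (μ : ℝ) : branchEta k a 0 μ = a * μ / √(k ! : ℝ) := by
  simp [branchEta, pRadicand_zero]

theorem branchEta_zero_root (hk : k ≠ 0) (ha : a ≠ 0) :
    branchEta k a 0 (k * √(k ! : ℝ) / a) = k := by
  have hs : √(k ! : ℝ) ≠ 0 := (Real.sqrt_pos.2 (by positivity)).ne'
  rw [branchEta_zero]
  field_simp

theorem branchXi_self_zero (hk : k ≠ 0) (μ : ℝ) :
    branchXi k a k 0 μ = branchEta k a 0 μ / k := by
  simp [branchXi, hk, pFun_self_zero, branchLam_sub_rFun_zero hk]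

theorem branchXi_zero_of_lt {ℓ : ℕ} (hℓ : ℓ ≠ 0) (hℓk : ℓ < k) (μ : ℝ) :
    branchXi k a ℓ 0 μ = 0 := by
  simp [branchXi, hℓ, pFun_zero_of_lt hℓk]

theorem secularFun_zero (hk : k ≠ 0) (μ : ℝ) :
    secularFun k a 0 μ = a * μ / √(k ! : ℝ) / k - 1 := by
  rw [secularFun, Finset.sum_eq_single_of_mem k (by simp)]
  · simp [branchXi, hk, pFun_self_zero, branchLam_sub_rFun_zero hk, branchEta_zero]
  · intro ℓ hℓ hne
    rw [pFun_zero_of_lt (by grind), zero_mul]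

theorem secularFun_eq_zero_iff {ε μ : ℝ} :
    secularFun k a ε μ = 0 ↔ ∑ ℓ ∈ range (k + 1), pFun k ℓ ε * branchXi k a ℓ ε μ = 1 :=
  sub_eq_zero

theorem analyticAt_branchLam (μ : ℝ) :
    AnalyticAt ℝ (fun p : ℝ × ℝ => branchLam k p.1 p.2) (0, μ) := by
  unfold branchLam rFun; fun_prop

theorem analyticAt_branchEta (μ : ℝ) :
    AnalyticAt ℝ (fun p : ℝ × ℝ => branchEta k a p.1 p.2) (0, μ) :=
  (analyticAt_const.mul analyticAt_snd).div
    ((analyticAt_sqrt_pRadicand k 0).comp_of_eq analyticAt_fst rfl)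
    (Real.sqrt_pos.2 (pRadicand_zero_pos k 0)).ne'

theorem analyticAt_branchXi (hk : k ≠ 0) (μ : ℝ) (ℓ : ℕ) :
    AnalyticAt ℝ (fun p : ℝ × ℝ => branchXi k a ℓ p.1 p.2) (0, μ) := by
  rcases eq_or_ne ℓ 0 with rfl | hℓ
  · simpa [branchXi] using analyticAt_const
  · simp only [branchXi, if_neg hℓ]
    refine ((analyticAt_branchEta μ).mul
      ((analyticAt_pFun k ℓ).comp_of_eq analyticAt_fst rfl)).div
      ((analyticAt_branchLam μ).sub
        ((?_ : AnalyticAt ℝ (rFun k ℓ) 0).comp_of_eq analyticAt_fst rfl)) ?_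
    · unfold rFun; fun_prop
    · simpa [branchLam_sub_rFun_zero hk] using hℓ

theorem analyticAt_secularFun (hk : k ≠ 0) (μ : ℝ) :
    AnalyticAt ℝ (fun p : ℝ × ℝ => secularFun k a p.1 p.2) (0, μ) :=
  (Finset.analyticAt_fun_sum _ fun ℓ _ => ((analyticAt_pFun k ℓ).comp_of_eq analyticAt_fst rfl).mul
    (analyticAt_branchXi hk μ ℓ)).sub analyticAt_const

theorem exists_secularFun_root (hk : k ≠ 0) (ha : a ≠ 0) :
    ∃ μ : ℝ → ℝ, AnalyticAt ℝ μ 0 ∧ μ 0 = k * √(k ! : ℝ) / a ∧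
      ∀ᶠ ε in 𝓝 0, secularFun k a ε (μ ε) = 0 := by
  have hs : √(k ! : ℝ) ≠ 0 := (Real.sqrt_pos.2 (by positivity)).ne'
  have hslope : HasDerivAt (fun μ => secularFun k a 0 μ) (a / √(k ! : ℝ) / k)
      (k * √(k ! : ℝ) / a) := by
    simp only [secularFun_zero hk]
    simpa using (((hasDerivAt_id _).const_mul a).div_const _).div_const _ |>.sub_const 1
  obtain ⟨μ, hμ, hμ0, hroot⟩ :=
    (analyticAt_secularFun hk _).exists_implicitFunction hslope (by positivity)
  refine ⟨μ, hμ, hμ0, hroot.mono fun ε hε => hε.trans ?_⟩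
  rw [secularFun_zero hk]
  field_simp
  ring

theorem branchLam_mul_branchXi {ℓ : ℕ} {ε μ : ℝ} (hq : 0 < pRadicand k 0 ε)
    (hgap : ℓ ≠ 0 → branchLam k ε μ - rFun k ℓ ε ≠ 0) :
    branchLam k ε μ * branchXi k a ℓ ε μ =
      rFun k ℓ ε * branchXi k a ℓ ε μ + branchEta k a ε μ * pFun k ℓ ε := by
  have hs : √(pRadicand k 0 ε) ≠ 0 := (Real.sqrt_pos.2 hq).ne'
  rcases eq_or_ne ℓ 0 with rfl | hℓ
  · simp only [branchXi, branchLam, branchEta, pFun_eq, if_true, Nat.sub_zero]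
    field_simp
  · have hg := hgap hℓ
    simp only [branchXi, if_neg hℓ]
    field_simp
    ring

theorem eventually_branchLam_mul_branchXi (hk : k ≠ 0) {μ : ℝ → ℝ} (hμ : ContinuousAt μ 0) :
    ∀ᶠ ε in 𝓝 0, ∀ ℓ ≤ k, branchLam k ε (μ ε) * branchXi k a ℓ ε (μ ε) =
      rFun k ℓ ε * branchXi k a ℓ ε (μ ε) + branchEta k a ε (μ ε) * pFun k ℓ ε := by
  have hq : ∀ᶠ ε in 𝓝 0, 0 < pRadicand k 0 ε :=
    continuousAt_const.eventually_lt (analyticAt_pRadicand k 0).continuousAt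
      (pRadicand_zero_pos k 0)
  have hgap : ∀ᶠ ε in 𝓝 0, ∀ ℓ ≤ k, ℓ ≠ 0 → branchLam k ε (μ ε) - rFun k ℓ ε ≠ 0 := by
    refine (Set.finite_Iic k).eventually_all.2 fun ℓ _ => ?_
    rcases eq_or_ne ℓ 0 with rfl | hℓ
    · exact .of_forall fun _ h => absurd rfl h
    refine (ContinuousAt.eventually_ne ?_ ?_).mono fun _ h _ => h
    · exact ((analyticAt_branchLam (μ 0)).continuousAt.comp_of_eq
        (continuousAt_id.prodMk hμ) rfl).sub (by unfold rFun; fun_prop)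
    · simpa [branchLam_sub_rFun_zero hk] using hℓ
  filter_upwards [hq, hgap] with ε hqε hgapε ℓ hℓ
  exact branchLam_mul_branchXi hqε (hgapε ℓ hℓ)

end Branch

/-- existence of a real-analytic eigenvector branch through
`(η, ξ, λ) = (k, (a,0,…,0,1), k)` at `ε = 0` for the matrix
`diag(r_0(ε),…,r_k(ε)) + η(ε)·(p_ℓ(ε)p_{ℓ'}(ε))`. -/
theorem eigenvector_branch_exists (k : ℕ) (hk : 1 ≤ k) (a : ℝ) (ha : a ≠ 0) :
    ∃ δ : ℝ, 0 < δ ∧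
      ∃ (η : ℝ → ℝ) (ξ : ℕ → ℝ → ℝ) (lam : ℝ → ℝ),
        (∀ x ∈ Set.Ioo (-δ) δ, AnalyticAt ℝ η x) ∧
        (∀ ℓ ≤ k, ∀ x ∈ Set.Ioo (-δ) δ, AnalyticAt ℝ (ξ ℓ) x) ∧
        (∀ x ∈ Set.Ioo (-δ) δ, AnalyticAt ℝ lam x) ∧
        η 0 = k ∧ lam 0 = k ∧
        (∀ ε ∈ Set.Ioo (-δ) δ, ξ 0 ε = a) ∧
        ξ k 0 = 1 ∧
        (∀ ℓ, 1 ≤ ℓ → ℓ < k → ξ ℓ 0 = 0) ∧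
        ∀ ε ∈ Set.Ioo (-δ) δ,
          (∑ ℓ ∈ Finset.range (k + 1), pFun k ℓ ε * ξ ℓ ε) = 1 ∧
          ∀ ℓ ≤ k, lam ε * ξ ℓ ε = rFun k ℓ ε * ξ ℓ ε + η ε * pFun k ℓ ε := by
  have hk0 : k ≠ 0 := by omega
  obtain ⟨μ, hμ, hμ0, hroot⟩ := exists_secularFun_root hk0 ha
  have hη : ∀ᶠ ε in 𝓝 0, AnalyticAt ℝ (fun ε => branchEta k a ε (μ ε)) ε :=
    (analyticAt_branchEta (μ 0)).eventually_analyticAt_comp_graph hμ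
  have hξ : ∀ᶠ ε in 𝓝 0, ∀ ℓ ≤ k, AnalyticAt ℝ (fun ε => branchXi k a ℓ ε (μ ε)) ε :=
    (Set.finite_Iic k).eventually_all.2 fun ℓ _ =>
      (analyticAt_branchXi hk0 (μ 0) ℓ).eventually_analyticAt_comp_graph hμ
  have hlam : ∀ᶠ ε in 𝓝 0, AnalyticAt ℝ (fun ε => branchLam k ε (μ ε)) ε :=
    (analyticAt_branchLam (μ 0)).eventually_analyticAt_comp_graph hμ
  obtain ⟨δ, hδ, hball⟩ := Metric.eventually_nhds_iff_ball.1 <| hη.and <| hξ.and <| hlam.and <|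
    hroot.and <| eventually_branchLam_mul_branchXi hk0 hμ.continuousAt
  simp only [Real.ball_eq_Ioo, zero_sub, zero_add] at hball
  have hη0 : branchEta k a 0 (μ 0) = k := hμ0 ▸ branchEta_zero_root hk0 ha
  refine ⟨δ, hδ, fun ε => branchEta k a ε (μ ε), fun ℓ ε => branchXi k a ℓ ε (μ ε),
    fun ε => branchLam k ε (μ ε), fun x hx => (hball x hx).1,
    fun ℓ hℓ x hx => (hball x hx).2.1 ℓ hℓ, fun x hx => (hball x hx).2.2.1, hη0,
    branchLam_zero hk0 _, fun _ _ => if_pos rfl, ?_,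
    fun ℓ h1 h2 => branchXi_zero_of_lt (by omega) h2 _,
    fun ε hε => ⟨secularFun_eq_zero_iff.1 (hball ε hε).2.2.2.1, (hball ε hε).2.2.2.2⟩⟩
  show branchXi k a k 0 (μ 0) = 1
  rw [branchXi_self_zero hk0, hη0, div_self (by exact_mod_cast hk0)]
end
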